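/- arXiv:2207.06615 — 2 statements merged into one kernel-verified Lean document; each statement's English description precedes it below -/
import Mathlib

section
/- Let N ≥ 1, f : Fin N → Fin N and Λ ⊆ Fin N. Let L be the N×N real logic matrix whose i-th column is e_{f i}, let τ be the transient period of f, and let Ξ₂ = Σ_{i∈Λ} e_i ∈ ℝ^N. Then the system is globally approximately synchronous if and only if sgn(L^τ · 1_N) ≤ Ξ₂, where 1_N is the all-ones vector, sgn is applied entrywise and ≤ is the entrywise order on ℝ^N. -/
/-!
`L ^ τ` is the logic matrix of `f^[τ]`, so the `i`-th entry of `L ^ τ *ᵥ 1` counts the preimages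
of `i` under `f^[τ]` and its sign is the indicator of the range of `f^[τ]`. The sign condition thus
says that `f^[τ]` maps every state into `Λ`. As `f^[τ]` lands in the periodic points, and a periodic
point whose orbit eventually stays in `Λ` already lies in `Λ`, this is equivalent to global
approximate synchronization (with `ρ = τ + 1` for the converse).
-/

open Finset Function Matrix

section LogicMatrix

variable {n : Type*} [DecidableEq n]

def logicMatrix (R : Type*) [Zero R] [One R] (f : n → n) : Matrix n n R :=
  Matrix.of fun i j => if i = f j then 1 else 0

lemma logicMatrix_id (R : Type*) [Semiring R] : logicMatrix R (id : n → n) = 1 := by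
  ext i j
  simp [logicMatrix, Matrix.one_apply]

lemma logicMatrix_mul [Fintype n] {R : Type*} [Semiring R] (f g : n → n) :
    logicMatrix R f * logicMatrix R g = logicMatrix R (f ∘ g) := by
  ext i j
  simp [logicMatrix, Matrix.mul_apply]

lemma logicMatrix_pow [Fintype n] {R : Type*} [Semiring R] (f : n → n) (k : ℕ) :
    logicMatrix R f ^ k = logicMatrix R f^[k] := by
  induction k with
  | zero => exact (logicMatrix_id R).symm
  | succ k ih => rw [pow_succ, ih, logicMatrix_mul, iterate_succ]

lemma logicMatrix_mulVec_one_apply [Fintype n] {R : Type*} [Semiring R] (f : n → n) (i : n) :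
    (logicMatrix R f *ᵥ fun _ => 1) i = #{j | f j = i} := by
  simp [logicMatrix, Matrix.mulVec, dotProduct, eq_comm]

lemma sign_logicMatrix_mulVec_one_apply [Fintype n] (f : n → n) (i : n) :
    Real.sign ((logicMatrix ℝ f *ᵥ fun _ => 1) i) = if i ∈ Set.range f then 1 else 0 := by
  rw [logicMatrix_mulVec_one_apply]
  split_ifs with hi
  · obtain ⟨j, rfl⟩ := hi
    exact Real.sign_of_pos (Nat.cast_pos.2 (card_pos.2 ⟨j, by simp⟩))
  · have : #{j | f j = i} = 0 := card_eq_zero.2 (filter_eq_empty_iff.2 fun j _ hj => hi ⟨j, hj⟩)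
    simp [this]

lemma sign_logicMatrix_mulVec_one_le_iff [Fintype n] (f : n → n) (s : Finset n) :
    (fun i => Real.sign ((logicMatrix ℝ f *ᵥ fun _ => 1) i)) ≤ ∑ i ∈ s, Pi.single i 1 ↔
      ∀ x, f x ∈ s := by
  simp only [Pi.le_def, sign_logicMatrix_mulVec_one_apply, Finset.sum_apply, sum_pi_single]
  refine ⟨fun h x => ?_, fun h i => ?_⟩
  · by_contra hx
    have := h (f x)
    norm_num [hx] at this
  · split_ifs <;> grind

end LogicMatrix

section Dynamics

variable {α : Type*} {f : α → α}

lemma mem_of_mem_periodicPts_of_forall_iterate_mem {s : Set α} {ρ : ℕ} {y : α}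
    (hy : y ∈ periodicPts f) (h : ∀ t ≥ ρ, f^[t] y ∈ s) : y ∈ s := by
  obtain ⟨p, hp, hpy⟩ := hy
  simpa [(hpy.mul_const ρ).eq] using h (p * ρ) (Nat.le_mul_of_pos_left ρ hp)

lemma exists_forall_ge_iterate_mem_iff {s : Set α} {τ : ℕ}
    (hτ : ∀ x, f^[τ] x ∈ periodicPts f) :
    (∃ ρ : ℕ, 1 ≤ ρ ∧ ∀ x, ∀ t ≥ ρ, f^[t] x ∈ s) ↔ ∀ x, f^[τ] x ∈ s := by
  refine ⟨fun ⟨ρ, _, h⟩ x => mem_of_mem_periodicPts_of_forall_iterate_mem (hτ x) (h _),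
    fun h => ⟨τ + 1, by omega, fun x t ht => ?_⟩⟩
  obtain ⟨k, rfl⟩ := Nat.exists_eq_add_of_le (Nat.le_of_succ_le ht)
  rw [iterate_add_apply]
  exact h _

end Dynamics

theorem global_approx_sync_iff_sign_condition_general (N : ℕ) (f : Fin N → Fin N)
    (Λ : Finset (Fin N))
    (L : Matrix (Fin N) (Fin N) ℝ)
    (hL : L = Matrix.of fun i j => if i = f j then (1 : ℝ) else 0)
    (τ : ℕ) (hτ : IsLeast {t : ℕ | ∀ x : Fin N, f^[t] x ∈ Function.periodicPts f} τ) :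
    (∃ ρ : ℕ, 1 ≤ ρ ∧ ∀ x : Fin N, ∀ t ≥ ρ, f^[t] x ∈ Λ) ↔
    (fun i : Fin N =>
        Real.sign (((L ^ τ).mulVec (fun _ : Fin N => (1 : ℝ))) i)) ≤
      (∑ i ∈ Λ, (Pi.single i (1 : ℝ) : Fin N → ℝ)) := by
  rw [show L = logicMatrix ℝ f from hL, logicMatrix_pow, sign_logicMatrix_mulVec_one_le_iff]
  exact exists_forall_ge_iterate_mem_iff hτ.1

/-- Corollary 2(2): global approximate synchronization holds iff
`sgn(L^τ · 1_N) ≤ Ξ₂` entrywise, where `Ξ₂` is the index vector of `Λ`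
and `1_N` the all-ones vector. -/
theorem global_approx_sync_iff_sign_condition (N : ℕ) (hN : 1 ≤ N) (f : Fin N → Fin N)
    (Λ : Finset (Fin N))
    (L : Matrix (Fin N) (Fin N) ℝ)
    (hL : L = Matrix.of fun i j => if i = f j then (1 : ℝ) else 0)
    (τ : ℕ) (hτ : IsLeast {t : ℕ | ∀ x : Fin N, f^[t] x ∈ Function.periodicPts f} τ) :
    (∃ ρ : ℕ, 1 ≤ ρ ∧ ∀ x : Fin N, ∀ t ≥ ρ, f^[t] x ∈ Λ) ↔
    (fun i : Fin N =>
        Real.sign (((L ^ τ).mulVec (fun _ : Fin N => (1 : ℝ))) i)) ≤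
      (∑ i ∈ Λ, (Pi.single i (1 : ℝ) : Fin N → ℝ)) :=
  global_approx_sync_iff_sign_condition_general N f Λ L hL τ hτ
end

section
/- Let N ≥ 1, f : Fin N → Fin N, Λ ⊆ Fin N and Φ ⊆ Fin N nonempty, and let τ be the transient period of f and I the maximum invariant subset of Λ. Suppose the system is approximately synchronous with respect to Φ. Then the shortest approximate synchronization time with respect to Φ — the least integer ρ ≥ 1 such that f^[t] x ∈ Λ for all x ∈ Φ and all t ≥ ρ — equals the least integer t ≥ 1 such that f^[t] x ∈ I for all x ∈ Φ; moreover this value is at most max(τ, 1). -/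
/-!
The forward orbit `{f^[t] x | t ≥ ρ}` is invariant, so it lies in `Λ` exactly when it lies in
the maximum invariant subset `I` of `Λ`; since `I` is itself invariant, this happens exactly
when `f^[ρ] x ∈ I`. Hence both infima are taken over the same set. For the bound, from time `τ`
on every orbit runs through periodic points, and a periodic point returns to itself at
arbitrarily late times, so an orbit that eventually stays in `Λ` is in `Λ` at every `t ≥ τ`.
-/

namespace Function

variable {α : Type*} {f : α → α} {Λ : Set α}

def maxInvariantSubset (f : α → α) (Λ : Set α) : Set α :=
  ⋃₀ {S : Set α | S ⊆ Λ ∧ f '' S ⊆ S}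

theorem maxInvariantSubset_subset : maxInvariantSubset f Λ ⊆ Λ :=
  Set.sUnion_subset fun _ hS => hS.1

theorem mapsTo_maxInvariantSubset :
    Set.MapsTo f (maxInvariantSubset f Λ) (maxInvariantSubset f Λ) := by
  rintro x ⟨S, hS, hxS⟩
  exact ⟨S, hS, hS.2 ⟨x, hxS, rfl⟩⟩

theorem iterate_mem_maxInvariantSubset_iff {x : α} {ρ : ℕ} :
    f^[ρ] x ∈ maxInvariantSubset f Λ ↔ ∀ t ≥ ρ, f^[t] x ∈ Λ := by
  constructor
  · intro hρ t ht
    obtain ⟨k, rfl⟩ := Nat.exists_eq_add_of_le' ht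
    rw [iterate_add_apply]
    exact maxInvariantSubset_subset (mapsTo_maxInvariantSubset.iterate k hρ)
  · intro h
    refine ⟨{y | ∃ t ≥ ρ, f^[t] x = y}, ⟨?_, ?_⟩, ρ, le_rfl, rfl⟩
    · rintro y ⟨t, ht, rfl⟩
      exact h t ht
    · rintro y ⟨_, ⟨t, ht, rfl⟩, rfl⟩
      exact ⟨t + 1, ht.trans t.le_succ, iterate_succ_apply' f t x⟩

theorem mem_of_mem_periodicPts_of_eventually_iterate_mem {y : α} {ρ : ℕ}
    (hy : y ∈ periodicPts f) (h : ∀ t ≥ ρ, f^[t] y ∈ Λ) : y ∈ Λ := by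
  obtain ⟨p, hp, hpy⟩ := hy
  rw [← (hpy.const_mul ρ).eq]
  exact h _ (Nat.le_mul_of_pos_right ρ hp)

theorem iterate_mem_of_iterate_mem_periodicPts {x : α} {τ ρ : ℕ}
    (hτ : f^[τ] x ∈ periodicPts f) (h : ∀ t ≥ ρ, f^[t] x ∈ Λ) :
    ∀ t ≥ τ, f^[t] x ∈ Λ := by
  intro t ht
  obtain ⟨k, rfl⟩ := Nat.exists_eq_add_of_le' ht
  rw [iterate_add_apply]
  refine mem_of_mem_periodicPts_of_eventually_iterate_mem (ρ := ρ)
    ((Commute.iterate_self f k).mapsTo_periodicPts hτ) fun s hs => ?_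
  simp only [← iterate_add_apply]
  exact h _ (hs.trans (Nat.le_add_right _ _))

end Function

theorem shortest_sync_time_eq_general (N : ℕ) (f : Fin N → Fin N)
    (Λ Φ : Set (Fin N))
    (τ : ℕ) (hτ : IsLeast {t : ℕ | ∀ x : Fin N, f^[t] x ∈ Function.periodicPts f} τ)
    (I : Set (Fin N)) (hI : I = ⋃₀ {S : Set (Fin N) | S ⊆ Λ ∧ f '' S ⊆ S})
    (hsync : ∃ ρ : ℕ, 1 ≤ ρ ∧ ∀ x ∈ Φ, ∀ t ≥ ρ, f^[t] x ∈ Λ) :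
    sInf {ρ : ℕ | 1 ≤ ρ ∧ ∀ x ∈ Φ, ∀ t ≥ ρ, f^[t] x ∈ Λ} =
        sInf {t : ℕ | 1 ≤ t ∧ ∀ x ∈ Φ, f^[t] x ∈ I} ∧
      sInf {ρ : ℕ | 1 ≤ ρ ∧ ∀ x ∈ Φ, ∀ t ≥ ρ, f^[t] x ∈ Λ} ≤ max τ 1 := by
  obtain ⟨ρ, -, hρ⟩ := hsync
  have hI : I = Function.maxInvariantSubset f Λ := hI
  subst hI
  have hsets : {ρ : ℕ | 1 ≤ ρ ∧ ∀ x ∈ Φ, ∀ t ≥ ρ, f^[t] x ∈ Λ} =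
      {t : ℕ | 1 ≤ t ∧ ∀ x ∈ Φ, f^[t] x ∈ Function.maxInvariantSubset f Λ} := by
    simp only [Function.iterate_mem_maxInvariantSubset_iff]
  refine ⟨congrArg sInf hsets, Nat.sInf_le ⟨le_max_right τ 1, fun x hx t ht => ?_⟩⟩
  exact Function.iterate_mem_of_iterate_mem_periodicPts (hτ.1 x) (hρ x hx) t
    (le_of_max_le_left ht)

/-- Theorem 2(1): if the system is approximately synchronous with respect
to a nonempty `Φ`, the shortest approximate synchronization time with
respect to `Φ` equals the least `t ≥ 1` such that `f^[t]` maps `Φ` into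
the maximum invariant subset `I` of `Λ`, and it is at most `max τ 1`. -/
theorem shortest_sync_time_eq (N : ℕ) (hN : 1 ≤ N) (f : Fin N → Fin N)
    (Λ Φ : Set (Fin N)) (hΦ : Φ.Nonempty)
    (τ : ℕ) (hτ : IsLeast {t : ℕ | ∀ x : Fin N, f^[t] x ∈ Function.periodicPts f} τ)
    (I : Set (Fin N)) (hI : I = ⋃₀ {S : Set (Fin N) | S ⊆ Λ ∧ f '' S ⊆ S})
    (hsync : ∃ ρ : ℕ, 1 ≤ ρ ∧ ∀ x ∈ Φ, ∀ t ≥ ρ, f^[t] x ∈ Λ) :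
    sInf {ρ : ℕ | 1 ≤ ρ ∧ ∀ x ∈ Φ, ∀ t ≥ ρ, f^[t] x ∈ Λ} =
        sInf {t : ℕ | 1 ≤ t ∧ ∀ x ∈ Φ, f^[t] x ∈ I} ∧
      sInf {ρ : ℕ | 1 ≤ ρ ∧ ∀ x ∈ Φ, ∀ t ≥ ρ, f^[t] x ∈ Λ} ≤ max τ 1 :=
  shortest_sync_time_eq_general N f Λ Φ τ hτ I hI hsync
end
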